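/- arXiv:2307.12877 — 5 statements merged into one kernel-verified Lean document; each statement's English description precedes it below -/
import Mathlib

section
/- The 4-dimensional polytope {(t4,t5,t6,t8) ∈ ℝ⁴_{≥0} : t5 + 2t6 + t8 ≤ 1, t4 + t6 + t8 ≤ 1, t4 + t5 - t6 - t8 ≤ 0} has Lebesgue volume 1/72. -/
open MeasureTheory
open Set

lemma posPow_hasDerivAt (n : ℕ) (x : ℝ) :
    HasDerivAt (fun y : ℝ => (max 0 y)^(n+2)) ((n+2) * (max 0 x)^(n+1)) x := by
  rcases lt_trichotomy x 0 with hx | hx | hx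
  · have h0 : max 0 x = 0 := max_eq_left hx.le
    rw [h0, zero_pow (Nat.succ_ne_zero n), mul_zero]
    have : (fun y : ℝ => (max 0 y)^(n+2)) =ᶠ[nhds x] fun _ => (0:ℝ) := by
      filter_upwards [eventually_lt_nhds hx] with y hy
      rw [max_eq_left hy.le, zero_pow (by omega)]
    exact (hasDerivAt_const x 0).congr_of_eventuallyEq this
  · subst hx
    have h0 : max 0 (0:ℝ) = 0 := max_self 0
    rw [h0, zero_pow (Nat.succ_ne_zero n), mul_zero]
    rw [hasDerivAt_iff_isLittleO]
    simp only [h0, zero_pow (by omega : n+2 ≠ 0), sub_zero, mul_zero, smul_zero]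
    rw [Asymptotics.isLittleO_iff]
    intro c hc
    have : ∀ᶠ y : ℝ in nhds 0, |y| < min c 1 := by
      have := Metric.ball_mem_nhds (0:ℝ) (lt_min hc one_pos)
      filter_upwards [this] with y hy
      simpa [Real.dist_eq] using hy
    filter_upwards [this] with y hy
    have h1 : max 0 y ≤ |y| := max_le (abs_nonneg y) (le_abs_self y)
    have h2 : (max 0 y)^(n+2) ≤ |y|^(n+2) := pow_le_pow_left₀ (le_max_left 0 y) h1 _
    have h3 : |y|^(n+2) ≤ |y|^2 :=
      pow_le_pow_of_le_one (abs_nonneg y) (le_of_lt (lt_of_lt_of_le hy (min_le_right c 1))) (by omega)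
    have h4 : |y|^2 ≤ c * |y| := by
      have : |y| ≤ c := le_of_lt (lt_of_lt_of_le hy (min_le_left c 1))
      nlinarith [abs_nonneg y]
    calc ‖(max 0 y)^(n+2)‖ = (max 0 y)^(n+2) := by
            rw [Real.norm_eq_abs, abs_of_nonneg (pow_nonneg (le_max_left 0 y) _)]
      _ ≤ c * |y| := le_trans h2 (le_trans h3 h4)
      _ = c * ‖y‖ := by rw [Real.norm_eq_abs]
  · have h0 : max 0 x = x := max_eq_right hx.le
    have : (fun y : ℝ => (max 0 y)^(n+2)) =ᶠ[nhds x] fun y => y^(n+2) := by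
      filter_upwards [eventually_gt_nhds hx] with y hy
      rw [max_eq_right hy.le]
    have hp := hasDerivAt_pow (n+2) x
    rw [h0]
    exact (hp.congr_of_eventuallyEq this).congr_deriv (by push_cast; ring)

lemma integral_pospow (p q : ℝ) (hq : q ≠ 0) (n : ℕ) (u v : ℝ) :
    ∫ x in u..v, (max 0 (p + q*x))^(n+1)
      = ((max 0 (p+q*v))^(n+2) - (max 0 (p+q*u))^(n+2)) / ((n+2)*q) := by
  have hd : ∀ x : ℝ, HasDerivAt (fun y => (max 0 (p + q*y))^(n+2) / ((n+2)*q))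
      ((max 0 (p + q*x))^(n+1)) x := by
    intro x
    have haff : HasDerivAt (fun y : ℝ => p + q*y) q x := by
      simpa using (hasDerivAt_id x).const_mul q |>.const_add p
    have := (posPow_hasDerivAt n (p + q*x)).comp x haff
    have h2 := this.div_const ((n+2)*q)
    exact h2.congr_deriv (by rw [div_eq_iff (mul_ne_zero (by positivity) hq)]; ring)
  rw [intervalIntegral.integral_eq_sub_of_hasDerivAt (fun x _ => hd x)
    (Continuous.intervalIntegrable (by fun_prop) u v)]
  ring

noncomputable def Fb (a b : ℝ) : ℝ :=
  (max 0 (a-b)) * max 0 (1-2*a-b) + (max 0 (1-a-2*b - max 0 (a-b)))^2/2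
    - (max 0 (1-2*a-3*b))^2/4

noncomputable def Ga (a : ℝ) : ℝ :=
  -(5/18)*(max 0 (1+(-2)*a))^3 + (1/4)*(max 0 (1+(-2)*a))^2 + (1/12)*(max 0 (1+(-3)*a))^3

lemma Fb_cont (a : ℝ) : Continuous (fun b => Fb a b) := by unfold Fb; fun_prop

lemma Ga_cont : Continuous Ga := by unfold Ga; fun_prop

lemma Fb_nonneg (a b : ℝ) (ha : 0 ≤ a) (hb : 0 ≤ b) : 0 ≤ Fb a b := by
  unfold Fb
  have h1 : max 0 (a-b) ≤ a + b := max_le (by linarith) (by linarith)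
  have h2 : max 0 (1-2*a-3*b) ≤ max 0 (1-a-2*b - max 0 (a-b)) :=
    max_le_max le_rfl (by linarith)
  have h3 : (max 0 (1-2*a-3*b))^2 ≤ (max 0 (1-a-2*b - max 0 (a-b)))^2 :=
    pow_le_pow_left₀ (le_max_left _ _) h2 2
  have h4 : (0:ℝ) ≤ (max 0 (a-b)) * max 0 (1-2*a-b) :=
    mul_nonneg (le_max_left _ _) (le_max_left _ _)
  have h5 := sq_nonneg (max 0 (1-2*a-3*b))
  linarith

lemma Ga_nonneg (a : ℝ) (ha : 0 ≤ a) (ha1 : a ≤ 1) : 0 ≤ Ga a := by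
  unfold Ga
  rcases le_total (1+(-3)*a) 0 with h | h
  · rw [max_eq_left h]
    have hP : max 0 (1+(-2)*a) ≤ 1/3 := max_le (by norm_num) (by linarith)
    have hP0 : 0 ≤ max 0 (1+(-2)*a) := le_max_left _ _
    nlinarith [sq_nonneg (max 0 (1+(-2)*a))]
  · rw [max_eq_right h, max_eq_right (by linarith : (0:ℝ) ≤ 1+(-2)*a)]
    nlinarith [sq_nonneg a, sq_nonneg (1-3*a), mul_nonneg ha (sq_nonneg (1-3*a))]

lemma piece3 (a b : ℝ) (ha : 0 ≤ a) (ha1 : a ≤ 1) (hb : 0 ≤ b) :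
    ∫ x in (a+b)..(1:ℝ), max 0 (min (1-b-2*x) (1-a-x) - max 0 (a+b-x))
      = (max 0 (1-2*a-3*b))^2/4 := by
  have hcongr : Set.EqOn (fun x => max 0 (min (1-b-2*x) (1-a-x) - max 0 (a+b-x)))
      (fun x => (max 0 ((1-b) + (-2)*x))^1) (Set.uIcc (a+b) 1) := by
    intro x hx
    rcases le_total (a+b) x with h | h
    · have h2 : max 0 (a+b-x) = 0 := max_eq_left (by linarith)
      have h1 : min (1-b-2*x) (1-a-x) = 1-b-2*x := min_eq_left (by linarith)
      simp only [h1, h2, pow_one, sub_zero]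
      congr 1; ring
    · rcases le_total (a+b) 1 with hab1 | hab1
      · have hx' : a+b ≤ x := by
          have : x ∈ Set.Icc (a+b) 1 := by rwa [Set.uIcc_of_le hab1] at hx
          exact this.1
        have hxe : x = a+b := le_antisymm h hx'
        have h1 : min (1-b-2*x) (1-a-x) = 1-b-2*x := min_eq_left (by nlinarith)
        have h2 : max 0 (a+b-x) = 0 := max_eq_left (by linarith)
        simp only [h1, h2, pow_one, sub_zero]
        congr 1; ring
      · have hx1 : 1 ≤ x := by
          have : x ∈ Set.Icc 1 (a+b) := by rwa [Set.uIcc_of_ge hab1] at hx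
          exact this.1
        have h1 : min (1-b-2*x) (1-a-x) = 1-b-2*x := min_eq_left (by linarith)
        have h2 : max 0 (a+b-x) = a+b-x := max_eq_right (by linarith)
        simp only [h1, h2, pow_one]
        rw [max_eq_left (by linarith), max_eq_left (by linarith)]
  rw [intervalIntegral.integral_congr hcongr, integral_pospow (1-b) (-2) (by norm_num) 0]
  rw [show (1-b) + (-2)*(1:ℝ) = -(1+b) by ring, show (1-b) + (-2)*(a+b) = 1-2*a-3*b by ring]
  rw [max_eq_left (by linarith : -(1+b) ≤ (0:ℝ))]
  ring

lemma piece2 (a b u : ℝ) (hu : a - b ≤ u) (hu0 : 0 ≤ u) (hua : u ≤ a+b) :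
    ∫ x in u..(a+b), max 0 (min (1-b-2*x) (1-a-x) - max 0 (a+b-x))
      = ((max 0 (1-a-2*b-u))^2 - (max 0 (1-2*a-3*b))^2)/2 := by
  have hcongr : Set.EqOn (fun x => max 0 (min (1-b-2*x) (1-a-x) - max 0 (a+b-x)))
      (fun x => (max 0 ((1-a-2*b) + (-1)*x))^1) (Set.uIcc u (a+b)) := by
    intro x hx
    rw [Set.uIcc_of_le hua] at hx
    obtain ⟨hx1, hx2⟩ := hx
    have h1 : min (1-b-2*x) (1-a-x) = 1-b-2*x := min_eq_left (by linarith)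
    have h2 : max 0 (a+b-x) = a+b-x := max_eq_right (by linarith)
    simp only [h1, h2, pow_one]
    congr 1; ring
  rw [intervalIntegral.integral_congr hcongr, integral_pospow (1-a-2*b) (-1) (by norm_num) 0]
  rw [show (1-a-2*b) + (-1)*(a+b) = 1-2*a-3*b by ring,
    show (1-a-2*b) + (-1)*u = 1-a-2*b-u by ring]
  ring

lemma key1 (a b : ℝ) (ha : 0 ≤ a) (ha1 : a ≤ 1) (hb : 0 ≤ b) :
    ∫ c in (0:ℝ)..1, max 0 (min (1-b-2*c) (1-a-c) - max 0 (a+b-c)) = Fb a b := by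
  have hcont : Continuous (fun c : ℝ => max 0 (min (1-b-2*c) (1-a-c) - max 0 (a+b-c))) := by
    fun_prop
  rcases le_total a b with hab | hab
  · rw [← intervalIntegral.integral_add_adjacent_intervals
      (hcont.intervalIntegrable 0 (a+b)) (hcont.intervalIntegrable (a+b) 1)]
    rw [piece2 a b 0 (by linarith) le_rfl (by linarith), piece3 a b ha ha1 hb]
    unfold Fb
    rw [max_eq_left (by linarith : a - b ≤ (0:ℝ))]
    ring_nf
  · rw [← intervalIntegral.integral_add_adjacent_intervals
      (hcont.intervalIntegrable 0 (a-b)) (hcont.intervalIntegrable (a-b) 1),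
      ← intervalIntegral.integral_add_adjacent_intervals
      (hcont.intervalIntegrable (a-b) (a+b)) (hcont.intervalIntegrable (a+b) 1)]
    have hpiece1 : ∫ x in (0:ℝ)..(a-b), max 0 (min (1-b-2*x) (1-a-x) - max 0 (a+b-x))
        = (a-b) * max 0 (1-2*a-b) := by
      have hcongr : Set.EqOn (fun x => max 0 (min (1-b-2*x) (1-a-x) - max 0 (a+b-x)))
          (fun _ => max 0 (1-2*a-b)) (Set.uIcc 0 (a-b)) := by
        intro x hx
        rw [Set.uIcc_of_le (by linarith)] at hx
        obtain ⟨hx1, hx2⟩ := hx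
        have h1 : min (1-b-2*x) (1-a-x) = 1-a-x := min_eq_right (by linarith)
        have h2 : max 0 (a+b-x) = a+b-x := max_eq_right (by linarith)
        simp only [h1, h2]
        congr 1; ring
      rw [intervalIntegral.integral_congr hcongr, intervalIntegral.integral_const]
      rw [smul_eq_mul]; ring
    rw [hpiece1, piece2 a b (a-b) le_rfl (by linarith) (by linarith), piece3 a b ha ha1 hb]
    unfold Fb
    rw [max_eq_right (by linarith : (0:ℝ) ≤ a - b)]
    ring_nf

lemma key2 (a : ℝ) (ha : 0 ≤ a) (ha1 : a ≤ 1) :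
    ∫ b in (0:ℝ)..1, Fb a b = Ga a := by
  have hFc := Fb_cont a
  rw [← intervalIntegral.integral_add_adjacent_intervals
    (hFc.intervalIntegrable 0 a) (hFc.intervalIntegrable a 1)]
  have hid : ∀ v : ℝ, (a-v) * max 0 ((1-2*a)+(-1)*v)
      = (max 0 ((1-2*a)+(-1)*v))^2 - (1-3*a) * max 0 ((1-2*a)+(-1)*v) := by
    intro v
    rcases le_total ((1-2*a)+(-1)*v) 0 with h | h
    · rw [max_eq_left h]; ring
    · rw [max_eq_right h]; ring
  have hpartA : ∫ b in (0:ℝ)..a, Fb a b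
      = ∫ b in (0:ℝ)..a, ((3/2)*(max 0 ((1-2*a)+(-1)*b))^2
          - (1-3*a)*(max 0 ((1-2*a)+(-1)*b))^1 - (1/4)*(max 0 ((1-2*a)+(-3)*b))^2) := by
    apply intervalIntegral.integral_congr
    intro x hx
    rw [Set.uIcc_of_le ha] at hx
    obtain ⟨hx1, hx2⟩ := hx
    unfold Fb
    rw [max_eq_right (by linarith : (0:ℝ) ≤ a - x),
      show 1-a-2*x-(a-x) = (1-2*a)+(-1)*x by ring,
      show 1-2*a-x = (1-2*a)+(-1)*x by ring,
      show 1-2*a-3*x = (1-2*a)+(-3)*x by ring]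
    simp only [pow_one]
    linear_combination hid x
  have hpartB : ∫ b in a..(1:ℝ), Fb a b
      = ∫ b in a..(1:ℝ), ((1/2)*(max 0 ((1-a)+(-2)*b))^2
          - (1/4)*(max 0 ((1-2*a)+(-3)*b))^2) := by
    apply intervalIntegral.integral_congr
    intro x hx
    rw [Set.uIcc_of_le ha1] at hx
    obtain ⟨hx1, hx2⟩ := hx
    unfold Fb
    rw [max_eq_left (by linarith : a - x ≤ (0:ℝ)),
      show 1-a-2*x-(0:ℝ) = (1-a)+(-2)*x by ring,
      show 1-2*a-3*x = (1-2*a)+(-3)*x by ring]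
    ring
  rw [hpartA, hpartB]
  have i1 : IntervalIntegrable (fun b : ℝ => (3/2)*(max 0 ((1-2*a)+(-1)*b))^2) volume 0 a :=
    Continuous.intervalIntegrable (by fun_prop) _ _
  have i2 : IntervalIntegrable (fun b : ℝ => (1-3*a)*(max 0 ((1-2*a)+(-1)*b))^1) volume 0 a :=
    Continuous.intervalIntegrable (by fun_prop) _ _
  have i3 : IntervalIntegrable (fun b : ℝ => (1/4)*(max 0 ((1-2*a)+(-3)*b))^2) volume 0 a :=
    Continuous.intervalIntegrable (by fun_prop) _ _
  have i4 : IntervalIntegrable (fun b : ℝ => (1/2)*(max 0 ((1-a)+(-2)*b))^2) volume a 1 :=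
    Continuous.intervalIntegrable (by fun_prop) _ _
  have i5 : IntervalIntegrable (fun b : ℝ => (1/4)*(max 0 ((1-2*a)+(-3)*b))^2) volume a 1 :=
    Continuous.intervalIntegrable (by fun_prop) _ _
  rw [intervalIntegral.integral_sub (i1.sub i2) i3, intervalIntegral.integral_sub i1 i2,
    intervalIntegral.integral_sub i4 i5,
    intervalIntegral.integral_const_mul, intervalIntegral.integral_const_mul,
    intervalIntegral.integral_const_mul, intervalIntegral.integral_const_mul,
    intervalIntegral.integral_const_mul]
  rw [integral_pospow (1-2*a) (-1) (by norm_num) 1 0 a,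
    integral_pospow (1-2*a) (-1) (by norm_num) 0 0 a,
    integral_pospow (1-2*a) (-3) (by norm_num) 1 0 a,
    integral_pospow (1-a) (-2) (by norm_num) 1 a 1,
    integral_pospow (1-2*a) (-3) (by norm_num) 1 a 1]
  rw [show (1-2*a) + (-1)*a = 1+(-3)*a by ring,
    show (1-2*a) + (-1)*(0:ℝ) = 1+(-2)*a by ring,
    show (1-2*a) + (-3)*a = 1+(-5)*a by ring,
    show (1-2*a) + (-3)*(0:ℝ) = 1+(-2)*a by ring,
    show (1-a) + (-2)*(1:ℝ) = -(1+a) by ring,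
    show (1-a) + (-2)*a = 1+(-3)*a by ring,
    show (1-2*a) + (-3)*(1:ℝ) = -(2+2*a) by ring]
  rw [max_eq_left (by linarith : -(1+a) ≤ (0:ℝ)),
    max_eq_left (by linarith : -(2+2*a) ≤ (0:ℝ))]
  have idQ : (1-3*a) * (max 0 (1+(-3)*a))^2 = (max 0 (1+(-3)*a))^3 := by
    rcases le_total (1+(-3)*a) 0 with h | h
    · rw [max_eq_left h]; ring
    · rw [max_eq_right h]; ring
  have idP : (1-3*a) * (max 0 (1+(-2)*a))^2
      = (3/2)*(max 0 (1+(-2)*a))^3 - (1/2)*(max 0 (1+(-2)*a))^2 := by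
    rcases le_total (1+(-2)*a) 0 with h | h
    · rw [max_eq_left h]; ring
    · rw [max_eq_right h]; ring
  unfold Ga
  linear_combination (1/2)*idQ - (1/2)*idP

lemma key3 : ∫ a in (0:ℝ)..1, Ga a = 1/72 := by
  unfold Ga
  have i1 : IntervalIntegrable (fun a : ℝ => -(5/18)*(max 0 (1+(-2)*a))^3) volume 0 1 :=
    Continuous.intervalIntegrable (by fun_prop) _ _
  have i2 : IntervalIntegrable (fun a : ℝ => (1/4)*(max 0 (1+(-2)*a))^2) volume 0 1 :=
    Continuous.intervalIntegrable (by fun_prop) _ _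
  have i3 : IntervalIntegrable (fun a : ℝ => (1/12)*(max 0 (1+(-3)*a))^3) volume 0 1 :=
    Continuous.intervalIntegrable (by fun_prop) _ _
  rw [intervalIntegral.integral_add (i1.add i2) i3, intervalIntegral.integral_add i1 i2,
    intervalIntegral.integral_const_mul, intervalIntegral.integral_const_mul,
    intervalIntegral.integral_const_mul]
  rw [integral_pospow 1 (-2) (by norm_num) 2 0 1,
    integral_pospow 1 (-2) (by norm_num) 1 0 1,
    integral_pospow 1 (-3) (by norm_num) 2 0 1]
  rw [show (1:ℝ) + (-2)*1 = -1 by ring, show (1:ℝ) + (-3)*1 = -2 by ring,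
    show (1:ℝ) + (-2)*0 = 1 by ring, show (1:ℝ) + (-3)*0 = 1 by ring]
  rw [max_eq_left (by norm_num : (-1:ℝ) ≤ 0), max_eq_left (by norm_num : (-2:ℝ) ≤ 0),
    max_eq_right (by norm_num : (0:ℝ) ≤ 1)]
  norm_num

def K (a b c : ℝ) : Set ℝ :=
  {d | 0 ≤ a ∧ 0 ≤ b ∧ 0 ≤ c ∧ 0 ≤ d ∧ b + 2*c + d ≤ 1 ∧ a + c + d ≤ 1 ∧ a + b - c - d ≤ 0}

lemma K_empty (a b c : ℝ) (h : a < 0 ∨ 1 < a ∨ b < 0 ∨ 1 < b ∨ c < 0 ∨ 1 < c) :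
    K a b c = ∅ := by
  ext d
  simp only [K, Set.mem_setOf_eq, Set.mem_empty_iff_false, iff_false]
  rintro ⟨h1, h2, h3, h4, h5, h6, h7⟩
  rcases h with h | h | h | h | h | h <;> linarith

lemma L3 (a b : ℝ) (ha : 0 ≤ a) (ha1 : a ≤ 1) (hb : 0 ≤ b) :
    (∫⁻ c, volume (K a b c)) = ENNReal.ofReal (Fb a b) := by
  calc ∫⁻ c, volume (K a b c)
      = ∫⁻ c, (Icc (0:ℝ) 1).indicator
          (fun c => ENNReal.ofReal (max 0 (min (1-b-2*c) (1-a-c) - max 0 (a+b-c)))) c := by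
        refine lintegral_congr fun c => ?_
        rcases le_or_gt 0 c with hc | hc
        · rcases le_or_gt c 1 with hc1 | hc1
          · rw [Set.indicator_of_mem (show c ∈ Icc (0:ℝ) 1 from ⟨hc, hc1⟩)]
            have hset : K a b c = Icc (max 0 (a+b-c)) (min (1-b-2*c) (1-a-c)) := by
              ext d
              simp only [K, Set.mem_setOf_eq, Set.mem_Icc, max_le_iff, le_min_iff]
              constructor
              · rintro ⟨_, _, _, h4, h5, h6, h7⟩
                exact ⟨⟨h4, by linarith⟩, by linarith, by linarith⟩
              · rintro ⟨⟨h1', h2'⟩, h3', h4'⟩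
                exact ⟨ha, hb, hc, h1', by linarith, by linarith, by linarith⟩
            rw [hset, Real.volume_Icc]
            rcases le_total (min (1-b-2*c) (1-a-c) - max 0 (a+b-c)) 0 with h | h
            · rw [max_eq_left h, ENNReal.ofReal_of_nonpos h, ENNReal.ofReal_zero]
            · rw [max_eq_right h]
          · rw [Set.indicator_of_notMem (fun hmem => absurd hmem.2 (not_le.mpr hc1)),
              K_empty a b c (by tauto), measure_empty]
        · rw [Set.indicator_of_notMem (fun hmem => absurd hmem.1 (not_le.mpr hc)),
            K_empty a b c (by tauto), measure_empty]
    _ = ∫⁻ c in Icc (0:ℝ) 1,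
          ENNReal.ofReal (max 0 (min (1-b-2*c) (1-a-c) - max 0 (a+b-c))) :=
        lintegral_indicator measurableSet_Icc _
    _ = ENNReal.ofReal (∫ c in Icc (0:ℝ) 1, max 0 (min (1-b-2*c) (1-a-c) - max 0 (a+b-c))) :=
        (ofReal_integral_eq_lintegral_ofReal
          (Continuous.integrableOn_Icc (by fun_prop))
          (ae_of_all _ fun c => le_max_left _ _)).symm
    _ = ENNReal.ofReal (∫ c in (0:ℝ)..1, max 0 (min (1-b-2*c) (1-a-c) - max 0 (a+b-c))) := by
        rw [MeasureTheory.integral_Icc_eq_integral_Ioc,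
          intervalIntegral.integral_of_le zero_le_one]
    _ = ENNReal.ofReal (Fb a b) := by rw [key1 a b ha ha1 hb]

lemma L2 (a : ℝ) (ha : 0 ≤ a) (ha1 : a ≤ 1) :
    (∫⁻ b, ∫⁻ c, volume (K a b c)) = ENNReal.ofReal (Ga a) := by
  calc ∫⁻ b, ∫⁻ c, volume (K a b c)
      = ∫⁻ b, (Icc (0:ℝ) 1).indicator (fun b => ∫⁻ c, volume (K a b c)) b := by
        refine lintegral_congr fun b => ?_
        rcases le_or_gt 0 b with hb | hb
        · rcases le_or_gt b 1 with hb1 | hb1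
          · rw [Set.indicator_of_mem (show b ∈ Icc (0:ℝ) 1 from ⟨hb, hb1⟩)]
          · rw [Set.indicator_of_notMem (fun hmem => absurd hmem.2 (not_le.mpr hb1))]
            have hK : ∀ c : ℝ, K a b c = ∅ := fun c => K_empty a b c (by tauto)
            simp [hK]
        · rw [Set.indicator_of_notMem (fun hmem => absurd hmem.1 (not_le.mpr hb))]
          have hK : ∀ c : ℝ, K a b c = ∅ := fun c => K_empty a b c (by tauto)
          simp [hK]
    _ = ∫⁻ b in Icc (0:ℝ) 1, ∫⁻ c, volume (K a b c) := lintegral_indicator measurableSet_Icc _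
    _ = ∫⁻ b in Icc (0:ℝ) 1, ENNReal.ofReal (Fb a b) :=
        setLIntegral_congr_fun measurableSet_Icc
          (fun b hb => L3 a b ha ha1 hb.1)
    _ = ENNReal.ofReal (∫ b in Icc (0:ℝ) 1, Fb a b) :=
        (ofReal_integral_eq_lintegral_ofReal
          ((Fb_cont a).integrableOn_Icc)
          ((ae_restrict_iff' measurableSet_Icc).mpr
            (ae_of_all _ fun b hb => Fb_nonneg a b ha hb.1))).symm
    _ = ENNReal.ofReal (∫ b in (0:ℝ)..1, Fb a b) := by
        rw [MeasureTheory.integral_Icc_eq_integral_Ioc,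
          intervalIntegral.integral_of_le zero_le_one]
    _ = ENNReal.ofReal (Ga a) := by rw [key2 a ha ha1]


theorem polytope_volume_A1 :
    volume {t : ℝ × ℝ × ℝ × ℝ |
      0 ≤ t.1 ∧ 0 ≤ t.2.1 ∧ 0 ≤ t.2.2.1 ∧ 0 ≤ t.2.2.2 ∧
      t.2.1 + 2 * t.2.2.1 + t.2.2.2 ≤ 1 ∧
      t.1 + t.2.2.1 + t.2.2.2 ≤ 1 ∧
      t.1 + t.2.1 - t.2.2.1 - t.2.2.2 ≤ 0} = 1 / 72 := by
  set S : Set (ℝ × ℝ × ℝ × ℝ) := {t : ℝ × ℝ × ℝ × ℝ |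
      0 ≤ t.1 ∧ 0 ≤ t.2.1 ∧ 0 ≤ t.2.2.1 ∧ 0 ≤ t.2.2.2 ∧
      t.2.1 + 2 * t.2.2.1 + t.2.2.2 ≤ 1 ∧
      t.1 + t.2.2.1 + t.2.2.2 ≤ 1 ∧
      t.1 + t.2.1 - t.2.2.1 - t.2.2.2 ≤ 0} with hSdef
  have hS : MeasurableSet S := by
    rw [hSdef]
    simp only [Set.setOf_and]
    have c1 : Continuous fun t : ℝ × ℝ × ℝ × ℝ => t.1 := by fun_prop
    have c2 : Continuous fun t : ℝ × ℝ × ℝ × ℝ => t.2.1 := by fun_prop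
    have c3 : Continuous fun t : ℝ × ℝ × ℝ × ℝ => t.2.2.1 := by fun_prop
    have c4 : Continuous fun t : ℝ × ℝ × ℝ × ℝ => t.2.2.2 := by fun_prop
    have c5 : Continuous fun t : ℝ × ℝ × ℝ × ℝ => t.2.1 + 2 * t.2.2.1 + t.2.2.2 := by fun_prop
    have c6 : Continuous fun t : ℝ × ℝ × ℝ × ℝ => t.1 + t.2.2.1 + t.2.2.2 := by fun_prop
    have c7 : Continuous fun t : ℝ × ℝ × ℝ × ℝ => t.1 + t.2.1 - t.2.2.1 - t.2.2.2 := by fun_prop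
    exact (((isClosed_le continuous_const c1).inter <|
      (isClosed_le continuous_const c2).inter <|
      (isClosed_le continuous_const c3).inter <|
      (isClosed_le continuous_const c4).inter <|
      (isClosed_le c5 continuous_const).inter <|
      (isClosed_le c6 continuous_const).inter
      (isClosed_le c7 continuous_const))).measurableSet
  have hS2 : ∀ a : ℝ, MeasurableSet (Prod.mk a ⁻¹' S) :=
    fun a => hS.preimage measurable_prodMk_left
  have hS3 : ∀ a b : ℝ, MeasurableSet (Prod.mk b ⁻¹' (Prod.mk a ⁻¹' S)) :=
    fun a b => (hS2 a).preimage measurable_prodMk_left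
  have step1 : ∀ a : ℝ, volume (Prod.mk a ⁻¹' S) = ∫⁻ b, ∫⁻ c, volume (K a b c) := by
    intro a
    rw [Measure.volume_eq_prod, Measure.prod_apply (hS2 a)]
    refine lintegral_congr fun b => ?_
    rw [Measure.volume_eq_prod, Measure.prod_apply (hS3 a b)]
    exact lintegral_congr fun c => rfl
  rw [Measure.volume_eq_prod, Measure.prod_apply hS]
  calc ∫⁻ a, volume (Prod.mk a ⁻¹' S)
      = ∫⁻ a, (Icc (0:ℝ) 1).indicator (fun a => ∫⁻ b, ∫⁻ c, volume (K a b c)) a := by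
        refine lintegral_congr fun a => ?_
        rw [step1 a]
        rcases le_or_gt 0 a with ha | ha
        · rcases le_or_gt a 1 with ha1 | ha1
          · rw [Set.indicator_of_mem (show a ∈ Icc (0:ℝ) 1 from ⟨ha, ha1⟩)]
          · rw [Set.indicator_of_notMem (fun hmem => absurd hmem.2 (not_le.mpr ha1))]
            have hK : ∀ b c : ℝ, K a b c = ∅ := fun b c => K_empty a b c (by tauto)
            simp [hK]
        · rw [Set.indicator_of_notMem (fun hmem => absurd hmem.1 (not_le.mpr ha))]
          have hK : ∀ b c : ℝ, K a b c = ∅ := fun b c => K_empty a b c (by tauto)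
          simp [hK]
    _ = ∫⁻ a in Icc (0:ℝ) 1, ∫⁻ b, ∫⁻ c, volume (K a b c) :=
        lintegral_indicator measurableSet_Icc _
    _ = ∫⁻ a in Icc (0:ℝ) 1, ENNReal.ofReal (Ga a) :=
        setLIntegral_congr_fun measurableSet_Icc
          (fun a ha => L2 a ha.1 ha.2)
    _ = ENNReal.ofReal (∫ a in Icc (0:ℝ) 1, Ga a) :=
        (ofReal_integral_eq_lintegral_ofReal
          (Ga_cont.integrableOn_Icc)
          ((ae_restrict_iff' measurableSet_Icc).mpr
            (ae_of_all _ fun a ha => Ga_nonneg a ha.1 ha.2))).symm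
    _ = ENNReal.ofReal (∫ a in (0:ℝ)..1, Ga a) := by
        rw [MeasureTheory.integral_Icc_eq_integral_Ioc,
          intervalIntegral.integral_of_le zero_le_one]
    _ = ENNReal.ofReal (1/72) := by rw [key3]
    _ = 1 / 72 := by
        rw [ENNReal.ofReal_div_of_pos (by norm_num), ENNReal.ofReal_one,
          ENNReal.ofReal_ofNat]
end

section
/- The 3-dimensional polytope {(t5,t6,t8) ∈ ℝ³_{≥0} : t6 + t8 ≤ 1, t5 - t6 - t8 ≤ 0, 2t5 + t6 ≤ 1} has Lebesgue volume 11/72. -/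
open MeasureTheory Set

/-!
Write `(x, y, z)` for `(t₅, t₆, t₈)`. Over the triangle `0 ≤ y`, `0 ≤ z`, `y + z ≤ 1` the fibre of
the polytope is the segment `0 ≤ x ≤ min (y + z) ((1 - y) / 2)`, so the volume is the integral of
this height over the triangle.
For fixed `y` the two bounds cross at `z = (1 - 3y) / 2`, which lies in `[0, 1 - y]` exactly when
`y ≤ 1/3`; integrating in `z` gives `(1 - y)² / 2 - max 0 (1 - 3y)² / 8`, and integrating that over
`[0, 1]` gives `1/6 - 1/72 = 11/72`.
-/

section RegionBetween
variable {α : Type*} [MeasurableSpace α] {μ : Measure α} {s : Set α} {f g : α → ℝ}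

theorem volume_prod_setOf_mem_Icc [SFinite μ] (hs : MeasurableSet s) (hf : Measurable f)
    (hg : Measurable g) :
    (volume.prod μ) {t : ℝ × α | t.2 ∈ s ∧ t.1 ∈ Icc (f t.2) (g t.2)} =
      ∫⁻ a in s, ENNReal.ofReal (g a - f a) ∂μ := by
  have hm : MeasurableSet {t : ℝ × α | t.2 ∈ s ∧ t.1 ∈ Icc (f t.2) (g t.2)} :=
    (measurableSet_region_between_cc hf hg hs).preimage measurable_swap
  rw [Measure.prod_apply_symm hm, ← lintegral_indicator hs]
  refine lintegral_congr fun a => ?_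
  by_cases ha : a ∈ s
  · rw [indicator_of_mem ha, ← Real.volume_Icc]
    congr 1 with x
    simp [ha]
  · simp [ha]

theorem setLIntegral_prod_setOf_mem_Icc (hs : MeasurableSet s) (hf : Measurable f)
    (hg : Measurable g) {G : α × ℝ → ENNReal} (hG : Measurable G) :
    ∫⁻ p in {p : α × ℝ | p.1 ∈ s ∧ p.2 ∈ Icc (f p.1) (g p.1)}, G p ∂(μ.prod volume) =
      ∫⁻ a in s, (∫⁻ x in Icc (f a) (g a), G (a, x)) ∂μ := by
  rw [← lintegral_indicator (measurableSet_region_between_cc hf hg hs),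
    lintegral_prod _ ((hG.indicator (measurableSet_region_between_cc hf hg hs)).aemeasurable),
    ← lintegral_indicator hs]
  refine lintegral_congr fun a => ?_
  by_cases ha : a ∈ s
  · rw [indicator_of_mem ha, ← lintegral_indicator measurableSet_Icc]
    congr 1 with x
    by_cases hx : x ∈ Icc (f a) (g a)
    · rw [indicator_of_mem hx,
        indicator_of_mem (s := {p : α × ℝ | p.1 ∈ s ∧ p.2 ∈ Icc (f p.1) (g p.1)}) ⟨ha, hx⟩]
    · rw [indicator_of_notMem hx, indicator_of_notMem fun h => hx h.2]
  · simp [ha]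

end RegionBetween

theorem setLIntegral_Icc_ofReal {f : ℝ → ℝ} {a b : ℝ} (hab : a ≤ b)
    (hf : IntegrableOn f (Icc a b)) (hf0 : ∀ x ∈ Icc a b, 0 ≤ f x) :
    ∫⁻ x in Icc a b, ENNReal.ofReal (f x) = ENNReal.ofReal (∫ x in a..b, f x) := by
  rw [intervalIntegral.integral_of_le hab, ← integral_Icc_eq_integral_Ioc,
    ofReal_integral_eq_lintegral_ofReal hf ((ae_restrict_iff' measurableSet_Icc).2
      (Filter.Eventually.of_forall hf0))]

theorem intervalIntegral.integral_min_eq_add {f g : ℝ → ℝ} {a b c : ℝ} (hac : a ≤ c)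
    (hcb : c ≤ b) (hf : Continuous f) (hg : Continuous g) (hfg : ∀ x ∈ Icc a c, f x ≤ g x)
    (hgf : ∀ x ∈ Icc c b, g x ≤ f x) :
    ∫ x in a..b, min (f x) (g x) = (∫ x in a..c, f x) + ∫ x in c..b, g x := by
  have hfg' : ∀ u v, IntervalIntegrable (fun x => min (f x) (g x)) volume u v :=
    (hf.min hg).intervalIntegrable
  rw [← intervalIntegral.integral_add_adjacent_intervals (hfg' a c) (hfg' c b)]
  congr 1
  · exact intervalIntegral.integral_congr fun x hx => min_eq_left (hfg x (uIcc_of_le hac ▸ hx))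
  · exact intervalIntegral.integral_congr fun x hx => min_eq_right (hgf x (uIcc_of_le hcb ▸ hx))

theorem integral_min_add_half_sub {y : ℝ} (hy : 0 ≤ y) :
    ∫ z in (0 : ℝ)..(1 - y), min (y + z) ((1 - y) / 2) =
      (1 - y) ^ 2 / 2 - max 0 (1 - 3 * y) ^ 2 / 8 := by
  rcases le_or_gt (1 / 3) y with hy3 | hy3
  · rw [max_eq_left (by linarith), intervalIntegral.integral_congr (g := fun _ => (1 - y) / 2)
      fun z hz => min_eq_right ?_]
    · rw [intervalIntegral.integral_const, smul_eq_mul]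
      ring
    · rcases mem_uIcc.1 hz with hz | hz <;> linarith [hz.1, hz.2]
  · rw [max_eq_right (by linarith), intervalIntegral.integral_min_eq_add
      (c := (1 - 3 * y) / 2) (by linarith) (by linarith) (by fun_prop) (by fun_prop)
      (fun z hz => by linarith [hz.2]) (fun z hz => by linarith [hz.1]),
      intervalIntegral.integral_comp_add_left (fun u => u), integral_id,
      intervalIntegral.integral_const, smul_eq_mul]
    ring

theorem integral_sq_sub_max_sq :
    ∫ y in (0 : ℝ)..1, ((1 - y) ^ 2 / 2 - max 0 (1 - 3 * y) ^ 2 / 8) = 11 / 72 := by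
  have hsq : ∫ y in (0 : ℝ)..1, (1 - y) ^ 2 / 2 = 1 / 6 := by
    rw [intervalIntegral.integral_div, intervalIntegral.integral_comp_sub_left (fun u : ℝ => u ^ 2)]
    norm_num
  have hmax : ∫ y in (0 : ℝ)..1, max 0 (1 - 3 * y) ^ 2 / 8 = 1 / 72 := by
    have hcont : Continuous fun u : ℝ => max 0 u ^ 2 := by fun_prop
    have hneg : ∫ u in (-2 : ℝ)..0, max 0 u ^ 2 = 0 := by
      rw [intervalIntegral.integral_congr (g := fun _ => 0) fun u hu => ?_]
      · simp
      · rw [uIcc_of_le (by norm_num)] at hu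
        simp [max_eq_left hu.2]
    have hpos : ∫ u in (0 : ℝ)..1, max 0 u ^ 2 = 1 / 3 := by
      rw [intervalIntegral.integral_congr (g := fun u => u ^ 2) fun u hu => ?_]
      · norm_num
      · rw [uIcc_of_le (by norm_num)] at hu
        simp [max_eq_right hu.1]
    rw [intervalIntegral.integral_div,
      intervalIntegral.integral_comp_sub_mul (fun u => max 0 u ^ 2) three_ne_zero,
      show (1 : ℝ) - 3 * 1 = -2 by norm_num, show (1 : ℝ) - 3 * 0 = 1 by norm_num,
      ← intervalIntegral.integral_add_adjacent_intervals (b := 0) (hcont.intervalIntegrable _ _)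
        (hcont.intervalIntegrable _ _), hneg, hpos]
    norm_num
  rw [intervalIntegral.integral_sub (Continuous.intervalIntegrable (by fun_prop) _ _)
    (Continuous.intervalIntegrable (by fun_prop) _ _), hsq, hmax]
  norm_num

theorem polytope_eq_setOf_mem_Icc :
    {t : ℝ × ℝ × ℝ |
      0 ≤ t.1 ∧ 0 ≤ t.2.1 ∧ 0 ≤ t.2.2 ∧
      t.2.1 + t.2.2 ≤ 1 ∧
      t.1 - t.2.1 - t.2.2 ≤ 0 ∧
      2 * t.1 + t.2.1 ≤ 1} =
      {t : ℝ × ℝ × ℝ | t.2 ∈ {p : ℝ × ℝ | p.1 ∈ Icc 0 1 ∧ p.2 ∈ Icc 0 (1 - p.1)} ∧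
        t.1 ∈ Icc 0 (min (t.2.1 + t.2.2) ((1 - t.2.1) / 2))} := by
  ext ⟨x, y, z⟩
  simp only [mem_ofPred_eq, mem_Icc, le_min_iff]
  constructor
  · rintro ⟨hx, hy, hz, hyz, hxyz, hxy⟩
    exact ⟨⟨⟨hy, by linarith⟩, hz, by linarith⟩, hx, by linarith, by linarith⟩
  · rintro ⟨⟨⟨hy, -⟩, hz, hyz⟩, hx, hxyz, hxy⟩
    exact ⟨hx, hy, hz, by linarith, by linarith, by linarith⟩

theorem lintegral_lintegral_min_add_half_sub :
    ∫⁻ y in Icc 0 1, ∫⁻ z in Icc 0 (1 - y), ENNReal.ofReal (min (y + z) ((1 - y) / 2)) =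
      ENNReal.ofReal (11 / 72) := calc
  _ = ∫⁻ y in Icc 0 1, ENNReal.ofReal ((1 - y) ^ 2 / 2 - max 0 (1 - 3 * y) ^ 2 / 8) := by
    refine setLIntegral_congr_fun measurableSet_Icc fun y hy => ?_
    rw [setLIntegral_Icc_ofReal (by linarith [hy.2]) (Continuous.integrableOn_Icc (by fun_prop))
      fun z hz => le_min (by linarith [hy.1, hz.1]) (by linarith [hy.2]),
      integral_min_add_half_sub hy.1]
  _ = ENNReal.ofReal (11 / 72) := by
    rw [setLIntegral_Icc_ofReal zero_le_one (Continuous.integrableOn_Icc (by fun_prop))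
      fun y hy => ?_, integral_sq_sub_max_sq]
    rcases max_cases 0 (1 - 3 * y) with ⟨h, -⟩ | ⟨h, h'⟩ <;> rw [h]
    · nlinarith
    · nlinarith [hy.1]

theorem polytope_volume_A2 :
    volume {t : ℝ × ℝ × ℝ |
      0 ≤ t.1 ∧ 0 ≤ t.2.1 ∧ 0 ≤ t.2.2 ∧
      t.2.1 + t.2.2 ≤ 1 ∧
      t.1 - t.2.1 - t.2.2 ≤ 0 ∧
      2 * t.1 + t.2.1 ≤ 1} = 11 / 72 := by
  have hT : MeasurableSet {p : ℝ × ℝ | p.1 ∈ Icc 0 1 ∧ p.2 ∈ Icc 0 (1 - p.1)} :=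
    measurableSet_region_between_cc measurable_const (by fun_prop) measurableSet_Icc
  rw [polytope_eq_setOf_mem_Icc, Measure.volume_eq_prod,
    volume_prod_setOf_mem_Icc (f := fun _ => 0) (g := fun p => min (p.1 + p.2) ((1 - p.1) / 2))
      hT measurable_const (by fun_prop),
    Measure.volume_eq_prod,
    setLIntegral_prod_setOf_mem_Icc (f := fun _ => 0) (g := fun y => 1 - y) measurableSet_Icc
      measurable_const (by fun_prop) (by fun_prop)]
  simp only [sub_zero]
  rw [lintegral_lintegral_min_add_half_sub, ENNReal.ofReal_div_of_pos (by norm_num)]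
  norm_num
end

section
/- Let p be a prime and μ the Haar measure on ℚ_p² normalized so that μ(ℤ_p²) = 1. Then the integral of 1/max{1, |x|_p, |xy|_p} over the set {(x,y) ∈ ℚ_p² : (|y|_p ≤ 1 and |xy|_p ≤ 1) or |x+y|_p ≤ 1} equals 1 + 2/p. -/
open MeasureTheory Set ENNReal

set_option linter.unusedSectionVars false
namespace PadicTama

variable {p : ℕ} [hp : Fact p.Prime]

lemma one_lt_p : (1:ℝ) < p := by exact_mod_cast hp.out.one_lt
lemma p_pos : (0:ℝ) < p := lt_trans zero_lt_one one_lt_p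

lemma exists_digit (z : ℚ_[p]) (hz : ‖z‖ ≤ 1) :
    ∃ j : ℕ, j < p ∧ ‖z - (j:ℚ_[p])‖ ≤ (p:ℝ)⁻¹ := by
  set w : ℤ_[p] := ⟨z, hz⟩ with hw
  refine ⟨w.appr 1, by simpa using w.appr_lt 1, ?_⟩
  have h := w.appr_spec 1
  rw [← PadicInt.norm_le_pow_iff_mem_span_pow] at h
  have : ((w - (w.appr 1 : ℤ_[p]) : ℤ_[p]) : ℚ_[p]) = z - (w.appr 1 : ℚ_[p]) := by
    push_cast [hw]; rfl
  rw [PadicInt.norm_def, this] at h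
  simpa using h

lemma digit_unique {j j' : ℕ} (hj : j < p) (hj' : j' < p) (z : ℚ_[p])
    (h : ‖z - (j:ℚ_[p])‖ ≤ (p:ℝ)⁻¹) (h' : ‖z - (j':ℚ_[p])‖ ≤ (p:ℝ)⁻¹) : j = j' := by
  have hd : ‖(((j:ℤ) - (j':ℤ) : ℤ) : ℚ_[p])‖ ≤ (p:ℝ)⁻¹ := by
    have e : (((j:ℤ) - (j':ℤ) : ℤ) : ℚ_[p]) = (z - (j':ℚ_[p])) + -(z - (j:ℚ_[p])) := by
      push_cast; ring
    rw [e]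
    exact le_trans (Padic.nonarchimedean _ _) (by simp only [max_le_iff, norm_neg]; exact ⟨h', h⟩)
  have hlt : ‖(((j:ℤ) - (j':ℤ) : ℤ) : ℚ_[p])‖ < 1 := lt_of_le_of_lt hd (by
    rw [inv_lt_one_iff₀]; right; exact one_lt_p)
  rw [Padic.norm_intCast_lt_one_iff] at hlt
  have := Int.eq_zero_of_abs_lt_dvd hlt (by
    rw [abs_sub_lt_iff]; constructor <;> omega)
  omega


/-- ball of radius p^n -/
def Bz (p : ℕ) [Fact p.Prime] (n : ℤ) : Set ℚ_[p] := {x | ‖x‖ ≤ (p:ℝ)^n}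

lemma norm_c (n : ℤ) : ‖((p:ℚ_[p])^(-n) : ℚ_[p])‖ = (p:ℝ)^n := by
  simp [Padic.norm_p, zpow_neg]

lemma tile (n : ℤ) (x : ℚ_[p]) :
    ‖x‖ ≤ (p:ℝ)^n ↔ ∃ j : ℕ, j < p ∧ ‖x - (j:ℚ_[p]) * (p:ℚ_[p])^(-n)‖ ≤ (p:ℝ)^(n-1) := by
  have hc0 : ((p:ℚ_[p])^(-n) : ℚ_[p]) ≠ 0 :=
    zpow_ne_zero _ (by exact_mod_cast hp.out.ne_zero)
  constructor
  · intro hx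
    rw [← norm_c n] at hx
    have hz : ‖x * ((p:ℚ_[p])^(-n))⁻¹‖ ≤ 1 := by
      rw [norm_mul, norm_inv]
      exact mul_inv_le_one_of_le₀ hx (norm_nonneg _)
    obtain ⟨j, hj, hjn⟩ := exists_digit _ hz
    refine ⟨j, hj, ?_⟩
    have e : x - (j:ℚ_[p]) * (p:ℚ_[p])^(-n)
        = (x * ((p:ℚ_[p])^(-n))⁻¹ - j) * (p:ℚ_[p])^(-n) := by
      have npz : ((p:ℚ_[p])^n : ℚ_[p]) ≠ 0 := zpow_ne_zero _ (by exact_mod_cast hp.out.ne_zero)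
      field_simp
    rw [e, norm_mul, norm_c, zpow_sub_one₀ (ne_of_gt p_pos)]
    calc ‖x * ((p:ℚ_[p])^(-n))⁻¹ - j‖ * (p:ℝ)^n ≤ (p:ℝ)⁻¹ * (p:ℝ)^n :=
          mul_le_mul_of_nonneg_right hjn (le_of_lt (zpow_pos p_pos n))
      _ = (p:ℝ)^n * (p:ℝ)⁻¹ := mul_comm _ _
  · rintro ⟨j, hj, hjn⟩
    have h1 : ‖(j:ℚ_[p]) * (p:ℚ_[p])^(-n)‖ ≤ (p:ℝ)^n := by
      rw [norm_mul, norm_c]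
      calc ‖(j:ℚ_[p])‖ * (p:ℝ)^n ≤ 1 * (p:ℝ)^n :=
            mul_le_mul_of_nonneg_right (by exact_mod_cast Padic.norm_int_le_one (j:ℤ))
              (le_of_lt (zpow_pos p_pos n))
        _ = (p:ℝ)^n := one_mul _
    have := Padic.nonarchimedean (x - (j:ℚ_[p]) * (p:ℚ_[p])^(-n)) ((j:ℚ_[p]) * (p:ℚ_[p])^(-n))
    simp only [sub_add_cancel] at this
    refine le_trans this (max_le (le_trans hjn ?_) h1)
    exact zpow_le_zpow_right₀ (le_of_lt one_lt_p) (by omega)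

lemma tile_unique (n : ℤ) (x : ℚ_[p]) {j j' : ℕ} (hj : j < p) (hj' : j' < p)
    (h : ‖x - (j:ℚ_[p]) * (p:ℚ_[p])^(-n)‖ ≤ (p:ℝ)^(n-1))
    (h' : ‖x - (j':ℚ_[p]) * (p:ℚ_[p])^(-n)‖ ≤ (p:ℝ)^(n-1)) : j = j' := by
  have hc0 : ((p:ℚ_[p])^(-n) : ℚ_[p]) ≠ 0 :=
    zpow_ne_zero _ (by exact_mod_cast hp.out.ne_zero)
  have key : ∀ (j : ℕ), ‖x - (j:ℚ_[p]) * (p:ℚ_[p])^(-n)‖ ≤ (p:ℝ)^(n-1) →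
      ‖x * ((p:ℚ_[p])^(-n))⁻¹ - j‖ ≤ (p:ℝ)⁻¹ := by
    intro i hi
    have e : x * ((p:ℚ_[p])^(-n))⁻¹ - i
        = (x - (i:ℚ_[p]) * (p:ℚ_[p])^(-n)) * ((p:ℚ_[p])^(-n))⁻¹ := by
      have npz : ((p:ℚ_[p])^n : ℚ_[p]) ≠ 0 := zpow_ne_zero _ (by exact_mod_cast hp.out.ne_zero)
      field_simp
    rw [e, norm_mul, norm_inv, norm_c]
    calc ‖x - (i:ℚ_[p]) * (p:ℚ_[p])^(-n)‖ * ((p:ℝ)^n)⁻¹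
        ≤ (p:ℝ)^(n-1) * ((p:ℝ)^n)⁻¹ := mul_le_mul_of_nonneg_right hi (by positivity)
      _ = (p:ℝ)⁻¹ := by
          rw [zpow_sub_one₀ (ne_of_gt p_pos), mul_right_comm,
            mul_inv_cancel₀ (zpow_ne_zero _ (ne_of_gt p_pos)), one_mul]
  exact digit_unique hj hj' _ (key j h) (key j' h')



variable [MeasurableSpace ℚ_[p]] [BorelSpace ℚ_[p]]
  (μ : Measure (ℚ_[p] × ℚ_[p])) [μ.IsAddHaarMeasure]

lemma measurable_Bz (n : ℤ) : MeasurableSet (Bz p n) :=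
  (isClosed_le continuous_norm continuous_const).measurableSet

lemma compact_Bz (n : ℤ) : IsCompact (Bz p n) := by
  have : Bz p n = Metric.closedBall 0 ((p:ℝ)^n) := by
    ext x; simp [Bz, mem_closedBall_zero_iff]
  rw [this]
  exact isCompact_closedBall 0 _

lemma Bz_fin (a b : ℤ) : μ (Bz p a ×ˢ Bz p b) ≠ ∞ :=
  (((compact_Bz a).prod (compact_Bz b)).measure_lt_top).ne

lemma meas_left_step (n : ℤ) {C : Set ℚ_[p]} (hC : MeasurableSet C) :
    μ (Bz p n ×ˢ C) = p * μ (Bz p (n-1) ×ˢ C) := by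
  set c : ℚ_[p] := (p:ℚ_[p])^(-n) with hc
  have key : Bz p n ×ˢ C = ⋃ j ∈ Finset.range p,
      (fun q : ℚ_[p] × ℚ_[p] => (-(((j:ℕ):ℚ_[p]) * c), 0) + q) ⁻¹' (Bz p (n-1) ×ˢ C) := by
    ext ⟨x, y⟩
    simp only [Bz, mem_prod, mem_setOf_eq, mem_iUnion, mem_preimage, Finset.mem_range,
      Prod.mk_add_mk, neg_add_eq_sub, zero_add, exists_prop]
    constructor
    · rintro ⟨hx, hy⟩
      obtain ⟨j, hj, hjn⟩ := (tile n x).1 hx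
      exact ⟨j, hj, hjn, hy⟩
    · rintro ⟨j, hj, hjn, hy⟩
      exact ⟨(tile n x).2 ⟨j, hj, hjn⟩, hy⟩
  have hmeas : ∀ j : ℕ, MeasurableSet
      ((fun q : ℚ_[p] × ℚ_[p] => (-(((j:ℕ):ℚ_[p]) * c), 0) + q) ⁻¹' (Bz p (n-1) ×ˢ C)) := by
    intro j
    exact (measurable_const_add _) ((measurable_Bz (n-1)).prod hC)
  have hdisj : Set.PairwiseDisjoint (↑(Finset.range p)) (fun j : ℕ =>
      (fun q : ℚ_[p] × ℚ_[p] => (-(((j:ℕ):ℚ_[p]) * c), 0) + q) ⁻¹' (Bz p (n-1) ×ˢ C)) := by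
    intro i hi j hj hij
    simp only [Function.onFun]
    rw [Set.disjoint_left]
    rintro ⟨x, y⟩ hxi hxj
    simp only [mem_preimage, Prod.mk_add_mk, neg_add_eq_sub, zero_add, mem_prod, Bz,
      mem_setOf_eq] at hxi hxj
    exact hij (tile_unique n x (Finset.mem_range.1 hi) (Finset.mem_range.1 hj) hxi.1 hxj.1)
  rw [key, measure_biUnion_finset hdisj (fun j _ => hmeas j)]
  have heach : ∀ j : ℕ,
      μ ((fun q : ℚ_[p] × ℚ_[p] => (-(((j:ℕ):ℚ_[p]) * c), 0) + q) ⁻¹' (Bz p (n-1) ×ˢ C))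
      = μ (Bz p (n-1) ×ˢ C) := fun j => measure_preimage_add μ _ _
  rw [Finset.sum_congr rfl (fun j _ => heach j), Finset.sum_const, Finset.card_range,
    nsmul_eq_mul]

lemma meas_right_step (n : ℤ) {A : Set ℚ_[p]} (hA : MeasurableSet A) :
    μ (A ×ˢ Bz p n) = p * μ (A ×ˢ Bz p (n-1)) := by
  set c : ℚ_[p] := (p:ℚ_[p])^(-n) with hc
  have key : A ×ˢ Bz p n = ⋃ j ∈ Finset.range p,
      (fun q : ℚ_[p] × ℚ_[p] => (0, -(((j:ℕ):ℚ_[p]) * c)) + q) ⁻¹' (A ×ˢ Bz p (n-1)) := by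
    ext ⟨x, y⟩
    simp only [Bz, mem_prod, mem_setOf_eq, mem_iUnion, mem_preimage, Finset.mem_range,
      Prod.mk_add_mk, neg_add_eq_sub, zero_add, exists_prop]
    constructor
    · rintro ⟨hx, hy⟩
      obtain ⟨j, hj, hjn⟩ := (tile n y).1 hy
      exact ⟨j, hj, hx, hjn⟩
    · rintro ⟨j, hj, hx, hjn⟩
      exact ⟨hx, (tile n y).2 ⟨j, hj, hjn⟩⟩
  have hmeas : ∀ j : ℕ, MeasurableSet
      ((fun q : ℚ_[p] × ℚ_[p] => (0, -(((j:ℕ):ℚ_[p]) * c)) + q) ⁻¹' (A ×ˢ Bz p (n-1))) := by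
    intro j
    exact (measurable_const_add _) (hA.prod (measurable_Bz (n-1)))
  have hdisj : Set.PairwiseDisjoint (↑(Finset.range p)) (fun j : ℕ =>
      (fun q : ℚ_[p] × ℚ_[p] => (0, -(((j:ℕ):ℚ_[p]) * c)) + q) ⁻¹' (A ×ˢ Bz p (n-1))) := by
    intro i hi j hj hij
    simp only [Function.onFun]
    rw [Set.disjoint_left]
    rintro ⟨x, y⟩ hxi hxj
    simp only [mem_preimage, Prod.mk_add_mk, neg_add_eq_sub, zero_add, mem_prod, Bz,
      mem_setOf_eq] at hxi hxj
    exact hij (tile_unique n y (Finset.mem_range.1 hi) (Finset.mem_range.1 hj) hxi.2 hxj.2)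
  rw [key, measure_biUnion_finset hdisj (fun j _ => hmeas j)]
  have heach : ∀ j : ℕ,
      μ ((fun q : ℚ_[p] × ℚ_[p] => (0, -(((j:ℕ):ℚ_[p]) * c)) + q) ⁻¹' (A ×ˢ Bz p (n-1)))
      = μ (A ×ˢ Bz p (n-1)) := fun j => measure_preimage_add μ _ _
  rw [Finset.sum_congr rfl (fun j _ => heach j), Finset.sum_const, Finset.card_range,
    nsmul_eq_mul]



noncomputable def shearT (p : ℕ) [Fact p.Prime] : (ℚ_[p] × ℚ_[p]) ≃+ (ℚ_[p] × ℚ_[p]) where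
  toFun q := (q.1, q.1 + q.2)
  invFun q := (q.1, q.2 - q.1)
  left_inv q := by simp
  right_inv q := by simp
  map_add' a b := by
    simp only [Prod.fst_add, Prod.snd_add, Prod.mk_add_mk, Prod.mk.injEq]
    exact ⟨trivial, by ring⟩

lemma shearT_cont : Continuous (shearT p) :=
  continuous_fst.prodMk (continuous_fst.add continuous_snd)

lemma shearT_symm_cont : Continuous (shearT p).symm :=
  continuous_fst.prodMk (continuous_snd.sub continuous_fst)

lemma map_shearT (hμ : μ ({x : ℚ_[p] | ‖x‖ ≤ 1} ×ˢ {y : ℚ_[p] | ‖y‖ ≤ 1}) = 1) :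
    μ.map (shearT p) = μ := by
  have hHaar : (μ.map (shearT p)).IsAddHaarMeasure :=
    AddEquiv.isAddHaarMeasure_map μ (shearT p) shearT_cont shearT_symm_cont
  have h := Measure.isAddLeftInvariant_eq_smul (μ.map (shearT p)) μ
  set U : Set (ℚ_[p] × ℚ_[p]) := {x : ℚ_[p] | ‖x‖ ≤ 1} ×ˢ {y : ℚ_[p] | ‖y‖ ≤ 1} with hU
  have hUm : MeasurableSet U :=
    ((isClosed_le continuous_norm continuous_const).measurableSet).prod
      ((isClosed_le continuous_norm continuous_const).measurableSet)
  have hpre : (shearT p) ⁻¹' U = U := by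
    ext ⟨x, y⟩
    simp only [hU, mem_preimage, mem_prod, mem_setOf_eq, shearT, AddEquiv.coe_mk, Equiv.coe_fn_mk]
    constructor
    · rintro ⟨h1, h2⟩
      refine ⟨h1, ?_⟩
      have := Padic.nonarchimedean (x + y) (-x)
      have e : (x + y) + -x = y := by ring
      rw [e, norm_neg] at this
      exact le_trans this (max_le h2 (by simpa using h1))
    · rintro ⟨h1, h2⟩
      refine ⟨h1, ?_⟩
      exact le_trans (Padic.nonarchimedean x y) (max_le h1 h2)
  have hmapU : μ.map (shearT p) U = 1 := by
    rw [Measure.map_apply shearT_cont.measurable hUm, hpre, hμ]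
  have hc : (Measure.addHaarScalarFactor (μ.map (shearT p)) μ : ℝ≥0∞) = 1 := by
    have := congrArg (fun m : Measure (ℚ_[p] × ℚ_[p]) => m U) h
    simp only [Measure.smul_apply, ENNReal.smul_def, smul_eq_mul] at this
    rw [hmapU, hμ, mul_one] at this
    exact this.symm
  rw [h]
  have : Measure.addHaarScalarFactor (μ.map (shearT p)) μ = 1 := by
    exact_mod_cast hc
  rw [this, one_smul]



lemma hp0 : (p:ℝ≥0∞) ≠ 0 := Nat.cast_ne_zero.2 hp.out.ne_zero
lemma hpt : (p:ℝ≥0∞) ≠ ⊤ := ENNReal.natCast_ne_top p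

/-- sphere of radius p^n -/
def Sp (p : ℕ) [Fact p.Prime] (n : ℤ) : Set ℚ_[p] := {x | ‖x‖ = (p:ℝ)^n}

lemma measurable_Sp (n : ℤ) : MeasurableSet (Sp p n) :=
  (isClosed_eq continuous_norm continuous_const).measurableSet

lemma norm_mem_or (x : ℚ_[p]) (n : ℤ) (hx : ‖x‖ ≤ (p:ℝ)^n) :
    ‖x‖ = (p:ℝ)^n ∨ ‖x‖ ≤ (p:ℝ)^(n-1) := by
  by_cases h0 : x = 0
  · right; rw [h0, norm_zero]; positivity
  · rw [Padic.norm_eq_zpow_neg_valuation h0] at hx ⊢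
    rw [zpow_le_zpow_iff_right₀ one_lt_p] at hx
    rcases eq_or_lt_of_le hx with h | h
    · left; rw [h]
    · right; exact zpow_le_zpow_right₀ (le_of_lt one_lt_p) (by omega)

lemma Bz_eq_union (n : ℤ) : Bz p n = Sp p n ∪ Bz p (n-1) := by
  ext x
  simp only [Bz, Sp, mem_union, mem_setOf_eq]
  constructor
  · exact norm_mem_or x n
  · rintro (h | h)
    · exact le_of_eq h
    · exact le_trans h (zpow_le_zpow_right₀ (le_of_lt one_lt_p) (by omega))

lemma Sp_disj_Bz (n : ℤ) : Disjoint (Sp p n) (Bz p (n-1)) := by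
  rw [Set.disjoint_left]
  intro x hx hx'
  simp only [Sp, mem_setOf_eq] at hx
  simp only [Bz, mem_setOf_eq] at hx'
  rw [hx] at hx'
  exact absurd hx' (not_le.2 (zpow_lt_zpow_right₀ one_lt_p (by omega)))

variable (hμ : μ ({x : ℚ_[p] | ‖x‖ ≤ 1} ×ˢ {y : ℚ_[p] | ‖y‖ ≤ 1}) = 1)

lemma Bz_zero_eq : Bz p 0 = {x : ℚ_[p] | ‖x‖ ≤ 1} := by
  ext x; simp [Bz]

lemma sphere_add (n : ℤ) {C : Set ℚ_[p]} (hC : MeasurableSet C) :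
    μ (Sp p n ×ˢ C) + μ (Bz p (n-1) ×ˢ C) = μ (Bz p n ×ˢ C) := by
  rw [Bz_eq_union n, Set.union_prod]
  rw [measure_union _ ((measurable_Bz (n-1)).prod hC)]
  exact Set.disjoint_left.2 (fun q hq hq' =>
    Set.disjoint_left.1 (Sp_disj_Bz n) hq.1 hq'.1)


include hμ


lemma F1 : ∀ k : ℕ, μ (Bz p (k:ℤ) ×ˢ Bz p (-(k:ℤ))) = 1 := by
  intro k
  induction k with
  | zero => simpa [Bz_zero_eq] using hμ
  | succ k ih =>
    have h1 : μ (Bz p (k:ℤ) ×ˢ Bz p (-(k:ℤ))) =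
        p * μ (Bz p (k:ℤ) ×ˢ Bz p (-(k:ℤ)-1)) := meas_right_step μ _ (measurable_Bz _)
    have h2 : μ (Bz p (k:ℤ) ×ˢ Bz p (-(k:ℤ)-1)) = (p:ℝ≥0∞)⁻¹ := by
      rw [ih] at h1
      rw [← one_mul (μ _), ← ENNReal.inv_mul_cancel (hp0 (p := p)) hpt, mul_assoc, ← h1, mul_one]
    have h3 : μ (Bz p ((k:ℤ)+1) ×ˢ Bz p (-((k:ℤ)+1))) =
        p * μ (Bz p ((k:ℤ)+1-1) ×ˢ Bz p (-((k:ℤ)+1))) := meas_left_step μ _ (measurable_Bz _)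
    have e1 : ((k:ℤ)+1-1) = (k:ℤ) := by ring
    have e2 : (-((k:ℤ)+1)) = -(k:ℤ)-1 := by ring
    rw [e1, e2, h2] at h3
    push_cast
    rw [e2, h3, ENNReal.mul_inv_cancel (hp0 (p := p)) hpt]

lemma F2 : ∀ k : ℕ, μ (Bz p (k:ℤ) ×ˢ Bz p (-(k:ℤ)-1)) = (p:ℝ≥0∞)⁻¹ := by
  intro k
  have h1 : μ (Bz p (k:ℤ) ×ˢ Bz p (-(k:ℤ))) =
      p * μ (Bz p (k:ℤ) ×ˢ Bz p (-(k:ℤ)-1)) := meas_right_step μ _ (measurable_Bz _)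
  rw [F1 μ hμ k] at h1
  rw [← one_mul (μ _), ← ENNReal.inv_mul_cancel (hp0 (p := p)) hpt, mul_assoc, ← h1, mul_one]

lemma F3 : ∀ k : ℕ, μ (Bz p (k:ℤ) ×ˢ Bz p 0) = (p:ℝ≥0∞)^k := by
  intro k
  induction k with
  | zero => simpa [Bz_zero_eq] using hμ
  | succ k ih =>
    have h3 : μ (Bz p ((k:ℤ)+1) ×ˢ Bz p 0) =
        p * μ (Bz p ((k:ℤ)+1-1) ×ˢ Bz p 0) := meas_left_step μ _ (measurable_Bz _)
    have e1 : ((k:ℤ)+1-1) = (k:ℤ) := by ring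
    rw [e1, ih] at h3
    push_cast
    rw [h3, pow_succ, mul_comm]

lemma meas_P (k : ℕ) : μ (Sp p ((k:ℤ)+1) ×ˢ Bz p (-((k:ℤ)+1))) = 1 - (p:ℝ≥0∞)⁻¹ := by
  have h := sphere_add μ ((k:ℤ)+1) (measurable_Bz (-((k:ℤ)+1)))
  have e1 : ((k:ℤ)+1-1) = (k:ℤ) := by ring
  have e2 : (-((k:ℤ)+1)) = -(k:ℤ)-1 := by ring
  rw [e1, e2] at h
  rw [F2 μ hμ k] at h
  have h1 : μ (Bz p ((k:ℤ)+1) ×ˢ Bz p (-(k:ℤ)-1)) = 1 := by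
    have : ((k+1:ℕ) : ℤ) = (k:ℤ)+1 := by push_cast; ring
    have := F1 μ hμ (k+1)
    rw [show ((k+1:ℕ) : ℤ) = (k:ℤ)+1 by push_cast; ring,
      show (-((k:ℤ)+1)) = -(k:ℤ)-1 by ring] at this
    exact this
  rw [h1, ← e2] at h
  exact ENNReal.eq_sub_of_add_eq (ENNReal.inv_ne_top.2 (hp0 (p := p))) h

lemma meas_SpZ (k : ℕ) : μ (Sp p ((k:ℤ)+1) ×ˢ Bz p 0)
    = (p:ℝ≥0∞)^(k+1) - (p:ℝ≥0∞)^k := by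
  have h := sphere_add μ ((k:ℤ)+1) (measurable_Bz (0:ℤ))
  have e1 : ((k:ℤ)+1-1) = (k:ℤ) := by ring
  rw [e1, F3 μ hμ k] at h
  have h1 : μ (Bz p ((k:ℤ)+1) ×ˢ Bz p 0) = (p:ℝ≥0∞)^(k+1) := by
    have := F3 μ hμ (k+1)
    rw [show ((k+1:ℕ) : ℤ) = (k:ℤ)+1 by push_cast; ring] at this
    exact this
  rw [h1] at h
  exact ENNReal.eq_sub_of_add_eq (by simp [ENNReal.pow_ne_top, hpt]) h



lemma meas_Q (k : ℕ) :
    μ {q : ℚ_[p] × ℚ_[p] | ‖q.1‖ = (p:ℝ)^((k:ℤ)+1) ∧ ‖q.1 + q.2‖ ≤ 1}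
      = (p:ℝ≥0∞)^(k+1) - (p:ℝ≥0∞)^k := by
  have hset : {q : ℚ_[p] × ℚ_[p] | ‖q.1‖ = (p:ℝ)^((k:ℤ)+1) ∧ ‖q.1 + q.2‖ ≤ 1}
      = (shearT p) ⁻¹' (Sp p ((k:ℤ)+1) ×ˢ Bz p 0) := by
    ext ⟨x, y⟩
    simp [shearT, Sp, Bz, Set.mem_prod]
  rw [hset, ← Measure.map_apply shearT_cont.measurable
    ((measurable_Sp _).prod (measurable_Bz _)), map_shearT μ hμ, meas_SpZ μ hμ k]

omit hμ in
lemma norm_big_exists (x : ℚ_[p]) (hx : ¬ ‖x‖ ≤ 1) : ∃ k : ℕ, ‖x‖ = (p:ℝ)^((k:ℤ)+1) := by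
  have h0 : x ≠ 0 := by rintro rfl; simp at hx
  rw [Padic.norm_eq_zpow_neg_valuation h0] at hx ⊢
  push_neg at hx
  rw [show (1:ℝ) = (p:ℝ)^(0:ℤ) by simp, zpow_lt_zpow_iff_right₀ one_lt_p] at hx
  refine ⟨(-x.valuation - 1).toNat, ?_⟩
  congr 1
  omega

end PadicTama

open PadicTama Set ENNReal

theorem padic_tamagawa_volume_two (p : ℕ) [Fact p.Prime]
    [MeasurableSpace ℚ_[p]] [BorelSpace ℚ_[p]]
    (μ : Measure (ℚ_[p] × ℚ_[p])) [μ.IsAddHaarMeasure]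
    (hμ : μ ({x : ℚ_[p] | ‖x‖ ≤ 1} ×ˢ {y : ℚ_[p] | ‖y‖ ≤ 1}) = 1) :
    ∫ q in {q : ℚ_[p] × ℚ_[p] |
        (‖q.2‖ ≤ 1 ∧ ‖q.1 * q.2‖ ≤ 1) ∨ ‖q.1 + q.2‖ ≤ 1},
        (max 1 (max ‖q.1‖ ‖q.1 * q.2‖))⁻¹ ∂μ
      = 1 + 2 / p := by
  have hp := (Fact.out : p.Prime)
  set e : ℝ≥0∞ := (p:ℝ≥0∞) with he
  have he0 : e ≠ 0 := hp0
  have het : e ≠ ⊤ := hpt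
  have h1e : 1 < e := by exact_mod_cast Nat.one_lt_cast.2 hp.two_le
  set S : Set (ℚ_[p] × ℚ_[p]) := {q : ℚ_[p] × ℚ_[p] |
      (‖q.2‖ ≤ 1 ∧ ‖q.1 * q.2‖ ≤ 1) ∨ ‖q.1 + q.2‖ ≤ 1} with hSdef
  set A : Set (ℚ_[p] × ℚ_[p]) := Bz p 0 ×ˢ Bz p 0 with hAdef
  set P : ℕ → Set (ℚ_[p] × ℚ_[p]) := fun k => Sp p ((k:ℤ)+1) ×ˢ Bz p (-((k:ℤ)+1)) with hPdef
  set Q : ℕ → Set (ℚ_[p] × ℚ_[p]) := fun k =>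
      {q : ℚ_[p] × ℚ_[p] | ‖q.1‖ = (p:ℝ)^((k:ℤ)+1) ∧ ‖q.1 + q.2‖ ≤ 1} with hQdef
  set f : ℚ_[p] × ℚ_[p] → ℝ := fun q => (max 1 (max ‖q.1‖ ‖q.1 * q.2‖))⁻¹ with hfdef
  have hfpos : ∀ q : ℚ_[p] × ℚ_[p], 0 < max 1 (max ‖q.1‖ ‖q.1 * q.2‖) :=
    fun q => lt_of_lt_of_le zero_lt_one (le_max_left _ _)
  have hone_lt : ∀ k : ℕ, (1:ℝ) < (p:ℝ)^((k:ℤ)+1) := by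
    intro k
    rw [show (1:ℝ) = (p:ℝ)^(0:ℤ) by simp]
    exact zpow_lt_zpow_right₀ one_lt_p (by omega)
  -- norm of y on Q k
  have hQy : ∀ k : ℕ, ∀ x y : ℚ_[p], ‖x‖ = (p:ℝ)^((k:ℤ)+1) → ‖x + y‖ ≤ 1 →
      ‖y‖ = (p:ℝ)^((k:ℤ)+1) := by
    intro k x y hx hxy
    have hup : ‖y‖ ≤ (p:ℝ)^((k:ℤ)+1) := by
      have := Padic.nonarchimedean (x + y) (-x)
      have ee : (x + y) + -x = y := by ring
      rw [ee, norm_neg, hx] at this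
      exact le_trans this (max_le (le_trans hxy (le_of_lt (hone_lt k))) le_rfl)
    have hlow : (p:ℝ)^((k:ℤ)+1) ≤ ‖y‖ := by
      have := Padic.nonarchimedean (x + y) (-y)
      have ee : (x + y) + -y = x := by ring
      rw [ee, norm_neg, hx] at this
      rcases max_cases ‖x + y‖ ‖y‖ with ⟨hm, _⟩ | ⟨hm, _⟩
      · rw [hm] at this; exact absurd (le_trans this hxy) (not_le.2 (hone_lt k))
      · rw [hm] at this; exact this
    linarith
  -- decomposition of S
  have hdecomp : S = (A ∪ (⋃ k, P k)) ∪ (⋃ k, Q k) := by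
    ext ⟨x, y⟩
    simp only [hSdef, hAdef, hPdef, hQdef, mem_setOf_eq, mem_union, mem_iUnion, mem_prod,
      Bz, Sp]
    constructor
    · intro hs
      by_cases hx1 : ‖x‖ ≤ 1
      · left; left
        refine ⟨by simpa using hx1, ?_⟩
        rcases hs with ⟨hy, _⟩ | hxy
        · simpa using hy
        · have := Padic.nonarchimedean (x + y) (-x)
          have ee : (x + y) + -x = y := by ring
          rw [ee, norm_neg] at this
          simpa using le_trans this (max_le hxy hx1)
      · obtain ⟨k, hk⟩ := norm_big_exists x hx1
        rcases hs with ⟨hy, hxy⟩ | hxy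
        · left; right
          refine ⟨k, hk, ?_⟩
          rw [norm_mul, hk] at hxy
          rw [zpow_neg]
          rw [← le_div_iff₀' (lt_trans zero_lt_one (hone_lt k))] at hxy
          simpa [one_div] using hxy
        · right
          exact ⟨k, hk, hxy⟩
    · rintro ((⟨hx, hy⟩ | ⟨k, hx, hy⟩) | ⟨k, hx, hxy⟩)
      · left
        refine ⟨by simpa using hy, ?_⟩
        rw [norm_mul]
        simp only [zpow_zero] at hx hy
        calc ‖x‖ * ‖y‖ ≤ 1 * 1 := mul_le_mul hx hy (norm_nonneg y) zero_le_one
          _ = 1 := by norm_num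
      · left
        have hy1 : ‖y‖ ≤ 1 := le_trans hy (by
          rw [show (1:ℝ) = (p:ℝ)^(0:ℤ) by simp]
          exact zpow_le_zpow_right₀ (le_of_lt one_lt_p) (by omega))
        refine ⟨hy1, ?_⟩
        rw [norm_mul, hx]
        calc (p:ℝ)^((k:ℤ)+1) * ‖y‖ ≤ (p:ℝ)^((k:ℤ)+1) * (p:ℝ)^(-((k:ℤ)+1)) :=
              mul_le_mul_of_nonneg_left hy (by positivity)
          _ = 1 := by rw [zpow_neg]; exact mul_inv_cancel₀ (zpow_ne_zero _ (ne_of_gt p_pos))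
      · right; exact hxy
  -- measurability
  have hA_meas : MeasurableSet A := (measurable_Bz 0).prod (measurable_Bz 0)
  have hP_meas : ∀ k, MeasurableSet (P k) := fun k =>
    (measurable_Sp _).prod (measurable_Bz _)
  have hQ_meas : ∀ k, MeasurableSet (Q k) := by
    intro k
    have : Q k = {q : ℚ_[p] × ℚ_[p] | ‖q.1‖ = (p:ℝ)^((k:ℤ)+1)} ∩
        {q : ℚ_[p] × ℚ_[p] | ‖q.1 + q.2‖ ≤ 1} := by
      ext q; simp [hQdef, mem_setOf_eq]
    rw [this]
    exact ((isClosed_eq (continuous_norm.comp continuous_fst) continuous_const).measurableSet).inter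
      ((isClosed_le (continuous_norm.comp (continuous_fst.add continuous_snd))
        continuous_const).measurableSet)
  have hUP_meas : MeasurableSet (⋃ k, P k) := MeasurableSet.iUnion hP_meas
  have hUQ_meas : MeasurableSet (⋃ k, Q k) := MeasurableSet.iUnion hQ_meas
  -- basic disjointness helpers
  have hexp_inj : ∀ j k : ℕ, (p:ℝ)^((j:ℤ)+1) = (p:ℝ)^((k:ℤ)+1) → j = k := by
    intro j k h
    have h1 : ((j:ℤ)+1) ≤ ((k:ℤ)+1) :=
      (zpow_le_zpow_iff_right₀ (one_lt_p (p := p))).1 (le_of_eq h)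
    have h2 : ((k:ℤ)+1) ≤ ((j:ℤ)+1) :=
      (zpow_le_zpow_iff_right₀ (one_lt_p (p := p))).1 (le_of_eq h.symm)
    omega
  have hPdisj : Pairwise (Function.onFun Disjoint P) := by
    intro j k hjk
    simp only [Function.onFun, hPdef]
    rw [Set.disjoint_left]
    rintro ⟨x, y⟩ hj hk
    simp only [mem_prod, Sp, mem_setOf_eq] at hj hk
    exact hjk (hexp_inj j k (hj.1 ▸ hk.1))
  have hQdisj : Pairwise (Function.onFun Disjoint Q) := by
    intro j k hjk
    simp only [Function.onFun, hQdef]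
    rw [Set.disjoint_left]
    rintro ⟨x, y⟩ hj hk
    simp only [mem_setOf_eq] at hj hk
    exact hjk (hexp_inj j k (hj.1 ▸ hk.1))
  have hAP : Disjoint A (⋃ k, P k) := by
    rw [Set.disjoint_left]
    rintro ⟨x, y⟩ hA hP
    simp only [hAdef, mem_prod, Bz, mem_setOf_eq, zpow_zero] at hA
    simp only [mem_iUnion, hPdef, mem_prod, Sp, mem_setOf_eq] at hP
    obtain ⟨k, hk, -⟩ := hP
    exact absurd (hk ▸ hA.1) (not_le.2 (hone_lt k))
  have hAQ : Disjoint A (⋃ k, Q k) := by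
    rw [Set.disjoint_left]
    rintro ⟨x, y⟩ hA hQ
    simp only [hAdef, mem_prod, Bz, mem_setOf_eq, zpow_zero] at hA
    simp only [mem_iUnion, hQdef, mem_setOf_eq] at hQ
    obtain ⟨k, hk, -⟩ := hQ
    exact absurd (hk ▸ hA.1) (not_le.2 (hone_lt k))
  have hPQ : Disjoint (⋃ k, P k) (⋃ k, Q k) := by
    rw [Set.disjoint_left]
    rintro ⟨x, y⟩ hP hQ
    simp only [mem_iUnion, hPdef, hQdef, mem_prod, Sp, Bz, mem_setOf_eq] at hP hQ
    obtain ⟨j, hj, hyj⟩ := hP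
    obtain ⟨k, hk, hxy⟩ := hQ
    have hjk : j = k := hexp_inj j k (hj ▸ hk)
    subst hjk
    have hy := hQy j x y hj hxy
    have hlt : (p:ℝ)^(-((j:ℤ)+1)) < (p:ℝ)^((j:ℤ)+1) := zpow_lt_zpow_right₀ one_lt_p (by omega)
    rw [hy] at hyj
    linarith
  have hAUP : Disjoint (A ∪ ⋃ k, P k) (⋃ k, Q k) := Set.disjoint_union_left.2 ⟨hAQ, hPQ⟩
  -- the function is continuous
  have hf_cont : Continuous f := by
    apply Continuous.inv₀
    · exact continuous_const.max ((continuous_norm.comp continuous_fst).max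
        (continuous_norm.comp (continuous_fst.mul continuous_snd)))
    · exact fun q => ne_of_gt (hfpos q)
  -- convert to lintegral
  rw [integral_eq_lintegral_of_nonneg_ae
    (Filter.Eventually.of_forall (fun q => le_of_lt (inv_pos.2 (hfpos q))))
    hf_cont.aestronglyMeasurable]
  have hrw : ∫⁻ q in S, ENNReal.ofReal (f q) ∂μ = 1 + e⁻¹ + e⁻¹ := by
    rw [hdecomp, lintegral_union hUQ_meas hAUP, lintegral_union hUP_meas hAP]
    have hIA : ∫⁻ q in A, ENNReal.ofReal (f q) ∂μ = 1 := by
      have hval : ∀ q ∈ A, ENNReal.ofReal (f q) = (1:ℝ≥0∞) := by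
        intro q hq
        simp only [hAdef, mem_prod, Bz, mem_setOf_eq, zpow_zero] at hq
        have hxy : ‖q.1 * q.2‖ ≤ 1 := by
          rw [norm_mul]
          calc ‖q.1‖ * ‖q.2‖ ≤ 1 * 1 :=
                mul_le_mul hq.1 hq.2 (norm_nonneg _) zero_le_one
            _ = 1 := by norm_num
        have hm : max 1 (max ‖q.1‖ ‖q.1 * q.2‖) = 1 :=
          max_eq_left (max_le hq.1 hxy)
        simp only [hfdef]
        rw [hm, inv_one, ENNReal.ofReal_one]
      rw [setLIntegral_congr_fun hA_meas (fun q hq => hval q hq),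
        setLIntegral_const, one_mul, hAdef, Bz_zero_eq, hμ]
    have hIP : ∀ k : ℕ, ∫⁻ q in P k, ENNReal.ofReal (f q) ∂μ
        = (e^(k+1))⁻¹ * (1 - e⁻¹) := by
      intro k
      have hval : ∀ q ∈ P k, ENNReal.ofReal (f q) = (e^(k+1))⁻¹ := by
        rintro ⟨x, y⟩ hq
        simp only [hPdef, mem_prod, Sp, Bz, mem_setOf_eq] at hq
        obtain ⟨hx, hy⟩ := hq
        have hxy : ‖x * y‖ ≤ 1 := by
          rw [norm_mul, hx]
          calc (p:ℝ)^((k:ℤ)+1) * ‖y‖ ≤ (p:ℝ)^((k:ℤ)+1) * (p:ℝ)^(-((k:ℤ)+1)) :=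
                mul_le_mul_of_nonneg_left hy (by positivity)
            _ = 1 := by rw [zpow_neg]; exact mul_inv_cancel₀ (zpow_ne_zero _ (ne_of_gt p_pos))
        have hmax : max 1 (max ‖x‖ ‖x * y‖) = (p:ℝ)^((k:ℤ)+1) := by
          rw [hx, max_eq_left (le_trans hxy (le_of_lt (hone_lt k))),
            max_eq_right (le_of_lt (hone_lt k))]
        have hzp : (p:ℝ)^((k:ℤ)+1) = (p:ℝ)^(k+1 : ℕ) := by
          rw [show ((k:ℤ)+1) = ((k+1:ℕ):ℤ) by push_cast; ring, zpow_natCast]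
        simp only [hfdef, hmax, hzp]
        rw [ENNReal.ofReal_inv_of_pos (pow_pos (p_pos (p := p)) _), ENNReal.ofReal_pow (le_of_lt (p_pos (p := p)))]
        norm_num [he]
      rw [setLIntegral_congr_fun (hP_meas k) (fun q hq => hval q hq),
        setLIntegral_const]
      congr 1
      exact meas_P μ hμ k
    have hIQ : ∀ k : ℕ, ∫⁻ q in Q k, ENNReal.ofReal (f q) ∂μ
        = (e^(k+1))⁻¹ * (1 - e⁻¹) := by
      intro k
      have hval : ∀ q ∈ Q k, ENNReal.ofReal (f q) = (e^(k+1) * e^(k+1))⁻¹ := by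
        rintro ⟨x, y⟩ hq
        simp only [hQdef, mem_setOf_eq] at hq
        obtain ⟨hx, hxy⟩ := hq
        have hy := hQy k x y hx hxy
        have hnxy : ‖x * y‖ = (p:ℝ)^((k:ℤ)+1) * (p:ℝ)^((k:ℤ)+1) := by
          rw [norm_mul, hx, hy]
        have h1le : (1:ℝ) ≤ (p:ℝ)^((k:ℤ)+1) := le_of_lt (hone_lt k)
        have hxle : ‖x‖ ≤ ‖x * y‖ := by
          rw [hx, hnxy]
          nlinarith
        have hmax : max 1 (max ‖x‖ ‖x * y‖) = (p:ℝ)^((k:ℤ)+1) * (p:ℝ)^((k:ℤ)+1) := by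
          rw [max_eq_right hxle, hnxy]
          exact max_eq_right (by nlinarith)
        have hzp : (p:ℝ)^((k:ℤ)+1) = (p:ℝ)^(k+1 : ℕ) := by
          rw [show ((k:ℤ)+1) = ((k+1:ℕ):ℤ) by push_cast; ring, zpow_natCast]
        simp only [hfdef, hmax, hzp]
        rw [ENNReal.ofReal_inv_of_pos (by positivity <;> exact p_pos (p := p)),
          ENNReal.ofReal_mul (by positivity), ENNReal.ofReal_pow (le_of_lt (p_pos (p := p)))]
        norm_num [he]
      rw [setLIntegral_congr_fun (hQ_meas k) (fun q hq => hval q hq),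
        setLIntegral_const, meas_Q μ hμ k]
      -- now arithmetic in ℝ≥0∞
      have hek0 : e^(k+1) ≠ 0 := pow_ne_zero _ he0
      have hekt : e^(k+1) ≠ ⊤ := ENNReal.pow_ne_top het
      have hsub : (e:ℝ≥0∞)^(k+1) - e^k = e^(k+1) * (1 - e⁻¹) := by
        rw [ENNReal.mul_sub (fun _ _ => hekt), mul_one]
        congr 1
        rw [pow_succ, mul_assoc, ENNReal.mul_inv_cancel he0 het, mul_one]
      rw [hsub, ENNReal.mul_inv (Or.inl hek0) (Or.inr hek0), mul_mul_mul_comm,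
        ENNReal.inv_mul_cancel hek0 hekt, one_mul]
    rw [hIA, lintegral_iUnion hP_meas hPdisj, lintegral_iUnion hQ_meas hQdisj]
    have hsum : ∑' k : ℕ, (e^(k+1))⁻¹ * (1 - e⁻¹) = e⁻¹ := by
      have hr1 : e⁻¹ < 1 := ENNReal.inv_lt_one.2 h1e
      have : ∀ k : ℕ, (e^(k+1))⁻¹ * (1 - e⁻¹) = (e⁻¹)^(k+1) * (1 - e⁻¹) := by
        intro k; rw [← ENNReal.inv_pow]
      rw [tsum_congr this, ENNReal.tsum_mul_right]
      have hgeo : ∑' k : ℕ, (e⁻¹)^(k+1) = e⁻¹ * (1 - e⁻¹)⁻¹ := by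
        rw [tsum_congr (fun k => pow_succ' e⁻¹ k), ENNReal.tsum_mul_left,
          ENNReal.tsum_geometric]
      have h0' : (1 - e⁻¹) ≠ 0 := by
        rw [ne_eq, tsub_eq_zero_iff_le]
        exact not_le.2 hr1
      have ht' : (1 - e⁻¹) ≠ ⊤ := (lt_of_le_of_lt tsub_le_self one_lt_top).ne
      rw [hgeo, mul_assoc, ENNReal.inv_mul_cancel h0' ht', mul_one]
    rw [tsum_congr hIP, tsum_congr hIQ, hsum]
  rw [hrw]
  have hrt : e⁻¹ ≠ ⊤ := ENNReal.inv_ne_top.2 he0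
  rw [ENNReal.toReal_add (by simp [ENNReal.add_eq_top, hrt]) hrt,
    ENNReal.toReal_add (by simp) hrt]
  have hto : e⁻¹.toReal = (p:ℝ)⁻¹ := by simp [he]
  rw [ENNReal.toReal_one, hto]
  have hppos : (0:ℝ) < p := p_pos
  field_simp
  ring
end

section
/- Let n₁,…,n₉ be nonzero integers such that gcd(nᵢ,nⱼ)=1 whenever {i,j} is one of {1,3},{1,5},{1,6},{1,8},{1,9},{2,4},{2,6},{2,7},{2,8},{2,9},{3,4},{3,5},{3,7},{3,9},{4,5},{4,6},{4,8},{4,9},{5,6},{5,7},{5,8},{6,7},{6,9},{7,8}. Then gcd(n₁n₂n₄²n₅n₇, n₂n₃n₅n₆²n₈, n₁n₂²n₃n₄n₅²n₆, n₄n₆n₇n₈) = 1. -/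
set_option maxHeartbeats 1000000 in
theorem gcd_sections_M1 (n₁ n₂ n₃ n₄ n₅ n₆ n₇ n₈ n₉ : ℤ)
    (h₁ : n₁ ≠ 0) (h₂ : n₂ ≠ 0) (h₃ : n₃ ≠ 0) (h₄ : n₄ ≠ 0) (h₅ : n₅ ≠ 0)
    (h₆ : n₆ ≠ 0) (h₇ : n₇ ≠ 0) (h₈ : n₈ ≠ 0) (h₉ : n₉ ≠ 0)
    (c13 : Int.gcd n₁ n₃ = 1) (c15 : Int.gcd n₁ n₅ = 1) (c16 : Int.gcd n₁ n₆ = 1)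
    (c18 : Int.gcd n₁ n₈ = 1) (c19 : Int.gcd n₁ n₉ = 1)
    (c24 : Int.gcd n₂ n₄ = 1) (c26 : Int.gcd n₂ n₆ = 1) (c27 : Int.gcd n₂ n₇ = 1)
    (c28 : Int.gcd n₂ n₈ = 1) (c29 : Int.gcd n₂ n₉ = 1)
    (c34 : Int.gcd n₃ n₄ = 1) (c35 : Int.gcd n₃ n₅ = 1) (c37 : Int.gcd n₃ n₇ = 1)
    (c39 : Int.gcd n₃ n₉ = 1)
    (c45 : Int.gcd n₄ n₅ = 1) (c46 : Int.gcd n₄ n₆ = 1) (c48 : Int.gcd n₄ n₈ = 1)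
    (c49 : Int.gcd n₄ n₉ = 1)
    (c56 : Int.gcd n₅ n₆ = 1) (c57 : Int.gcd n₅ n₇ = 1) (c58 : Int.gcd n₅ n₈ = 1)
    (c67 : Int.gcd n₆ n₇ = 1) (c69 : Int.gcd n₆ n₉ = 1)
    (c78 : Int.gcd n₇ n₈ = 1) :
    Int.gcd (Int.gcd (n₁ * n₂ * n₄ ^ 2 * n₅ * n₇) (n₂ * n₃ * n₅ * n₆ ^ 2 * n₈) : ℤ)
      (Int.gcd (n₁ * n₂ ^ 2 * n₃ * n₄ * n₅ ^ 2 * n₆) (n₄ * n₆ * n₇ * n₈) : ℤ) = 1 := by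
  by_contra hne
  obtain ⟨p, hp, hpd⟩ := Nat.exists_prime_and_dvd hne
  have hpp : Prime (p : ℤ) := Nat.prime_iff_prime_int.mp hp
  have hdvd : (p : ℤ) ∣ (Int.gcd (Int.gcd (n₁ * n₂ * n₄ ^ 2 * n₅ * n₇) (n₂ * n₃ * n₅ * n₆ ^ 2 * n₈) : ℤ)
      (Int.gcd (n₁ * n₂ ^ 2 * n₃ * n₄ * n₅ ^ 2 * n₆) (n₄ * n₆ * n₇ * n₈) : ℤ) : ℤ) :=
    Int.natCast_dvd_natCast.mpr hpd
  have dM1 : (p : ℤ) ∣ n₁ * n₂ * n₄ ^ 2 * n₅ * n₇ :=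
    (hdvd.trans (Int.gcd_dvd_left _ _)).trans (Int.gcd_dvd_left _ _)
  have dM2 : (p : ℤ) ∣ n₂ * n₃ * n₅ * n₆ ^ 2 * n₈ :=
    (hdvd.trans (Int.gcd_dvd_left _ _)).trans (Int.gcd_dvd_right _ _)
  have dM4 : (p : ℤ) ∣ n₄ * n₆ * n₇ * n₈ :=
    (hdvd.trans (Int.gcd_dvd_right _ _)).trans (Int.gcd_dvd_right _ _)
  have K : ∀ {a b : ℤ}, Int.gcd a b = 1 → (p : ℤ) ∣ a → (p : ℤ) ∣ b → False := by
    intro a b hg da db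
    have h1 : (p : ℤ) ∣ (Int.gcd a b : ℤ) := Int.dvd_coe_gcd da db
    rw [hg] at h1
    exact hpp.not_unit (isUnit_of_dvd_one (by exact_mod_cast h1))
  have d1 : (p:ℤ) ∣ n₁ ∨ (p:ℤ) ∣ n₂ ∨ (p:ℤ) ∣ n₄ ∨ (p:ℤ) ∣ n₅ ∨ (p:ℤ) ∣ n₇ := by
    rcases hpp.dvd_mul.mp dM1 with h | h
    · rcases hpp.dvd_mul.mp h with h | h
      · rcases hpp.dvd_mul.mp h with h | h
        · rcases hpp.dvd_mul.mp h with h | h <;> tauto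
        · exact Or.inr (Or.inr (Or.inl (hpp.dvd_of_dvd_pow h)))
      · tauto
    · tauto
  have d2 : (p:ℤ) ∣ n₂ ∨ (p:ℤ) ∣ n₃ ∨ (p:ℤ) ∣ n₅ ∨ (p:ℤ) ∣ n₆ ∨ (p:ℤ) ∣ n₈ := by
    rcases hpp.dvd_mul.mp dM2 with h | h
    · rcases hpp.dvd_mul.mp h with h | h
      · rcases hpp.dvd_mul.mp h with h | h
        · rcases hpp.dvd_mul.mp h with h | h <;> tauto
        · tauto
      · exact Or.inr (Or.inr (Or.inr (Or.inl (hpp.dvd_of_dvd_pow h))))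
    · tauto
  have d4 : (p:ℤ) ∣ n₄ ∨ (p:ℤ) ∣ n₆ ∨ (p:ℤ) ∣ n₇ ∨ (p:ℤ) ∣ n₈ := by
    rcases hpp.dvd_mul.mp dM4 with h | h
    · rcases hpp.dvd_mul.mp h with h | h
      · rcases hpp.dvd_mul.mp h with h | h <;> tauto
      · tauto
    · tauto
  rcases d1 with h | h | h | h | h <;> rcases d2 with k | k | k | k | k <;>
    first
      | exact K c13 h k | exact K c15 h k | exact K c16 h k | exact K c18 h k
      | exact K c24 k h | exact K c26 h k | exact K c27 k h | exact K c28 h k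
      | exact K c34 k h | exact K c35 k h | exact K c37 k h
      | exact K c45 h k | exact K c46 h k | exact K c48 h k
      | exact K c56 h k | exact K c57 k h | exact K c58 h k
      | exact K c67 h k | exact K c67 k h | exact K c78 h k
      | (rcases d4 with m | m | m | m <;>
          first
            | exact K c24 h m | exact K c26 h m | exact K c27 h m | exact K c28 h m
            | exact K c24 k m | exact K c26 k m | exact K c27 k m | exact K c28 k m
            | exact K c45 m h | exact K c56 h m | exact K c57 h m | exact K c58 h m
            | exact K c45 m k | exact K c56 k m | exact K c57 k m | exact K c58 k m)
end

section
/- Let K be a field and let (x₀:…:x₄) ∈ ℙ⁴(K) satisfy x₀x₁ = x₂x₃ and x₀x₃ + x₁x₃ + x₂x₄ = 0. Then x₀x₃ = 0 if and only if the point lies on one of the five lines L₁ = {x₀=x₁=x₂=0}, L₂ = {x₀=x₂=x₃=0}, L₃ = {x₀=x₃=x₄=0}, L₄ = {x₁=x₂=x₃=0}, L₅ = {x₁=x₃=x₄=0}. -/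
theorem lines_characterisation_general {K : Type*} [Field K] (x : Fin 5 → K)
    (heq1 : x 0 * x 1 = x 2 * x 3)
    (heq2 : x 0 * x 3 + x 1 * x 3 + x 2 * x 4 = 0) :
    x 0 * x 3 = 0 ↔
      (x 0 = 0 ∧ x 1 = 0 ∧ x 2 = 0) ∨
      (x 0 = 0 ∧ x 2 = 0 ∧ x 3 = 0) ∨
      (x 0 = 0 ∧ x 3 = 0 ∧ x 4 = 0) ∨
      (x 1 = 0 ∧ x 2 = 0 ∧ x 3 = 0) ∨
      (x 1 = 0 ∧ x 3 = 0 ∧ x 4 = 0) := by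
  refine ⟨fun h ↦ ?_, ?_⟩
  · rcases mul_eq_zero.mp h with h0 | h3
    · have h23 : x 2 = 0 ∨ x 3 = 0 := by simpa [h0, eq_comm] using heq1
      rcases h23 with h2 | h3
      · have h13 : x 1 = 0 ∨ x 3 = 0 := by simpa [h0, h2] using heq2
        tauto
      · have h24 : x 2 = 0 ∨ x 4 = 0 := by simpa [h0, h3] using heq2
        tauto
    · have h01 : x 0 = 0 ∨ x 1 = 0 := by simpa [h3] using heq1
      have h24 : x 2 = 0 ∨ x 4 = 0 := by simpa [h3] using heq2
      tauto
  · rintro (⟨h, -⟩ | ⟨h, -⟩ | ⟨h, -⟩ | ⟨-, -, h⟩ | ⟨-, h, -⟩) <;> simp [h]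

theorem lines_characterisation {K : Type*} [Field K] (x : Fin 5 → K)
    (hx : x ≠ 0)
    (heq1 : x 0 * x 1 = x 2 * x 3)
    (heq2 : x 0 * x 3 + x 1 * x 3 + x 2 * x 4 = 0) :
    x 0 * x 3 = 0 ↔
      (x 0 = 0 ∧ x 1 = 0 ∧ x 2 = 0) ∨
      (x 0 = 0 ∧ x 2 = 0 ∧ x 3 = 0) ∨
      (x 0 = 0 ∧ x 3 = 0 ∧ x 4 = 0) ∨
      (x 1 = 0 ∧ x 2 = 0 ∧ x 3 = 0) ∨
      (x 1 = 0 ∧ x 3 = 0 ∧ x 4 = 0) :=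
  lines_characterisation_general x heq1 heq2
end
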